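/- If the formulas QZ ⊃ W = (Z ⊃ Q) ⊃ W and Z ⊃ W are both theorems of IPC, then W is a theorem of IPC (for any IPC formulas Q, Z, W). -/
import Mathlib

/-- Formulas of the Implicational Propositional Calculus: propositional
variables and implication. -/
inductive IPCFormula : Type where
  | var : ℕ → IPCFormula
  | imp : IPCFormula → IPCFormula → IPCFormula

infixr:60 " ⊃' " => IPCFormula.imp

/-- Derivability from a set of hypotheses Γ in the Hilbert system with
axiom schemes IPC1, IPC2, Peirce and the rule modus ponens. -/
inductive IPCDeriv : Set IPCFormula → IPCFormula → Prop where
  | hyp {Γ : Set IPCFormula} {X : IPCFormula} : X ∈ Γ → IPCDeriv Γ X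
  | ipc1 {Γ : Set IPCFormula} (X Y : IPCFormula) :
      IPCDeriv Γ (X ⊃' (Y ⊃' X))
  | ipc2 {Γ : Set IPCFormula} (X Y Z : IPCFormula) :
      IPCDeriv Γ ((X ⊃' (Y ⊃' Z)) ⊃' ((X ⊃' Y) ⊃' (X ⊃' Z)))
  | peirce {Γ : Set IPCFormula} (X Y : IPCFormula) :
      IPCDeriv Γ (((X ⊃' Y) ⊃' X) ⊃' X)
  | mp {Γ : Set IPCFormula} {X Y : IPCFormula} :
      IPCDeriv Γ (X ⊃' Y) → IPCDeriv Γ X → IPCDeriv Γ Y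

/-- A theorem of IPC: derivable from no hypotheses. -/
def IPCThm (X : IPCFormula) : Prop := IPCDeriv ∅ X

/-- Disjunction defined within IPC: X ∨ Y := (X ⊃ Y) ⊃ Y. -/
def IPCFormula.disj (X Y : IPCFormula) : IPCFormula := (X ⊃' Y) ⊃' Y

lemma ipc_syl {X Y Z : IPCFormula} (h1 : IPCThm (X ⊃' Y)) (h2 : IPCThm (Y ⊃' Z)) :
    IPCThm (X ⊃' Z) :=
  .mp (.mp (.ipc2 X Y Z) (.mp (.ipc1 (Y ⊃' Z) X) h2)) h1

lemma ipc_ap2 {A B C : IPCFormula} (h : IPCThm (A ⊃' (B ⊃' C))) (hb : IPCThm B) :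
    IPCThm (A ⊃' C) :=
  .mp (.mp (.ipc2 A B C) h) (.mp (.ipc1 B A) hb)

theorem stmt_18 (Q Z W : IPCFormula)
    (h1 : IPCThm ((Z ⊃' Q) ⊃' W)) (h2 : IPCThm (Z ⊃' W)) :
    IPCThm W := by
  have s1 : IPCThm ((W ⊃' Q) ⊃' ((Z ⊃' W) ⊃' (Z ⊃' Q))) :=
    ipc_syl (.ipc1 (W ⊃' Q) Z) (.ipc2 Z W Q)
  have s2 : IPCThm ((W ⊃' Q) ⊃' (Z ⊃' Q)) := ipc_ap2 s1 h2
  have s3 : IPCThm ((W ⊃' Q) ⊃' W) := ipc_syl s2 h1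
  exact .mp (.peirce W Q) s3
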